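/- arXiv:1210.6893 — 3 statements merged into one kernel-verified Lean document; each statement's English description precedes it below -/
import Mathlib

section
/- Let 𝒜 and ℬ be two finite σ-structures. The following are equivalent: (i) every {∃,∧,≠}-FO sentence true in 𝒜 is true in ℬ; (ii) there exists an injective homomorphism from 𝒜 to ℬ. -/
/-!
An injective homomorphism preserves atoms and disequalities, hence every {∃,∧,≠}-formula.
Conversely, enumerate `A` as `a₁, …, aₙ`: the sentence `∃ x₁ … xₙ`, conjunction of all atoms
true of the `aᵢ` and all `xᵢ ≠ xⱼ` for `i ≠ j`, holds in `A`, and any witness `bᵢ` for it in `B`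
gives the injective homomorphism `aᵢ ↦ bᵢ`. If that conjunction is empty, `A` has at most one
element and no true atoms, so any map into the nonempty `B` will do.
-/

namespace MC

/-- Which logical symbols (beyond ∃, ∧ and relational atoms) are allowed. -/
structure Frag where
  eq : Bool
  ne : Bool
  neg : Bool
  orF : Bool
  allF : Bool

/-- Formulas over a relational signature `σ` (with arities `ar`) in the syntactic
fragment `F`, with `n` free variables (de Bruijn style, quantifiers bind the last
variable). Atomic relational formulas, conjunction and existential quantification
are always allowed; the other symbols only if enabled in `F`. -/
inductive Fml (σ : Type) (ar : σ → ℕ) (F : Frag) : ℕ → Type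
  | rel {n : ℕ} (r : σ) (v : Fin (ar r) → Fin n) : Fml σ ar F n
  | equal {n : ℕ} (h : F.eq = true) (i j : Fin n) : Fml σ ar F n
  | nequal {n : ℕ} (h : F.ne = true) (i j : Fin n) : Fml σ ar F n
  | fnot {n : ℕ} (h : F.neg = true) (φ : Fml σ ar F n) : Fml σ ar F n
  | fand {n : ℕ} (φ ψ : Fml σ ar F n) : Fml σ ar F n
  | forr {n : ℕ} (h : F.orF = true) (φ ψ : Fml σ ar F n) : Fml σ ar F n
  | fex {n : ℕ} (φ : Fml σ ar F (n + 1)) : Fml σ ar F n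
  | fall {n : ℕ} (h : F.allF = true) (φ : Fml σ ar F (n + 1)) : Fml σ ar F n

/-- Satisfaction of a formula in a structure with domain `A` and
interpretation `I`, under a valuation of the free variables. -/
def Sat {σ : Type} {ar : σ → ℕ} {F : Frag} {A : Type}
    (I : ∀ r : σ, (Fin (ar r) → A) → Prop) :
    ∀ {n : ℕ}, Fml σ ar F n → (Fin n → A) → Prop
  | _, .rel r v, val => I r fun i => val (v i)
  | _, .equal _ i j, val => val i = val j
  | _, .nequal _ i j, val => val i ≠ val j
  | _, .fnot _ φ, val => ¬ Sat I φ val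
  | _, .fand φ ψ, val => Sat I φ val ∧ Sat I ψ val
  | _, .forr _ φ ψ, val => Sat I φ val ∨ Sat I ψ val
  | _, .fex φ, val => ∃ a : A, Sat I φ (Fin.snoc val a)
  | _, .fall _ φ, val => ∀ a : A, Sat I φ (Fin.snoc val a)

end MC

namespace MC

/-- `h : A → B` is a homomorphism between the structures `(A, IA)` and `(B, IB)`. -/
def IsHom {σ : Type} {ar : σ → ℕ} {A B : Type}
    (IA : ∀ r : σ, (Fin (ar r) → A) → Prop)
    (IB : ∀ r : σ, (Fin (ar r) → B) → Prop) (h : A → B) : Prop :=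
  ∀ (r : σ) (t : Fin (ar r) → A), IA r t → IB r fun i => h (t i)

/-- The fragment {∃,∧,≠}-FO. -/
def ppNeFrag : Frag := ⟨false, true, false, false, false⟩

namespace Fml

variable {σ : Type} {ar : σ → ℕ} {F : Frag}

def conj {n : ℕ} : Fml σ ar F n → List (Fml σ ar F n) → Fml σ ar F n
  | φ, [] => φ
  | φ, ψ :: l => .fand φ (conj ψ l)

def exClosure : (n : ℕ) → Fml σ ar F n → Fml σ ar F 0
  | 0, φ => φ
  | n + 1, φ => exClosure n (.fex φ)

end Fml

section Sat

variable {σ : Type} {ar : σ → ℕ} {F : Frag} {A B : Type}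

theorem sat_conj (I : ∀ r : σ, (Fin (ar r) → A) → Prop) {n : ℕ} (φ : Fml σ ar F n)
    (l : List (Fml σ ar F n)) (val : Fin n → A) :
    Sat I (φ.conj l) val ↔ Sat I φ val ∧ ∀ ψ ∈ l, Sat I ψ val := by
  induction l generalizing φ with
  | nil => simp [Fml.conj]
  | cons ψ l ih => simp only [Fml.conj, Sat, ih, List.forall_mem_cons]

theorem sat_exClosure (I : ∀ r : σ, (Fin (ar r) → A) → Prop) :
    ∀ (n : ℕ) (φ : Fml σ ar F n),
      Sat I (Fml.exClosure n φ) Fin.elim0 ↔ ∃ val : Fin n → A, Sat I φ val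
  | 0, φ => ⟨fun h => ⟨Fin.elim0, h⟩, fun ⟨val, h⟩ => Subsingleton.elim val Fin.elim0 ▸ h⟩
  | n + 1, φ => by
      rw [Fml.exClosure, sat_exClosure I n]
      constructor
      · rintro ⟨val, a, h⟩
        exact ⟨Fin.snoc val a, h⟩
      · rintro ⟨val, h⟩
        exact ⟨Fin.init val, val (Fin.last n), by rwa [Fin.snoc_init_self]⟩

theorem sat_exClosure_conj (I : ∀ r : σ, (Fin (ar r) → A) → Prop) {n : ℕ}
    (φ : Fml σ ar F n) (l : List (Fml σ ar F n)) :
    Sat I (Fml.exClosure n (φ.conj l)) Fin.elim0 ↔ ∃ val, ∀ ψ ∈ φ :: l, Sat I ψ val := by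
  simp only [sat_exClosure, sat_conj, List.forall_mem_cons]

theorem exists_forall_sat_of_containment [Nonempty B]
    {IA : ∀ r : σ, (Fin (ar r) → A) → Prop} {IB : ∀ r : σ, (Fin (ar r) → B) → Prop}
    (hcont : ∀ φ : Fml σ ar F 0, Sat IA φ Fin.elim0 → Sat IB φ Fin.elim0)
    {n : ℕ} {ι : Type} [Finite ι] (φ : ι → Fml σ ar F n)
    (hA : ∃ val : Fin n → A, ∀ i, Sat IA (φ i) val) :
    ∃ val : Fin n → B, ∀ i, Sat IB (φ i) val := by
  obtain ⟨L, hL⟩ : ∃ L : List (Fml σ ar F n), ∀ {C : Type} (I : ∀ r : σ, (Fin (ar r) → C) → Prop)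
      (val : Fin n → C), (∀ ψ ∈ L, Sat I ψ val) ↔ ∀ i, Sat I (φ i) val := by
    refine ⟨List.ofFn (φ ∘ (Finite.equivFin ι).symm), fun I val => ?_⟩
    simp only [List.forall_mem_ofFn_iff, Function.comp_apply]
    exact ⟨fun h i => by simpa using h (Finite.equivFin ι i), fun h _ => h _⟩
  simp only [← hL] at hA ⊢
  cases L with
  | nil => exact ⟨fun _ => Classical.arbitrary B, by simp⟩
  | cons ψ l =>
      rw [← sat_exClosure_conj] at hA ⊢
      exact hcont _ hA

theorem sat_of_injective_isHom
    {IA : ∀ r : σ, (Fin (ar r) → A) → Prop} {IB : ∀ r : σ, (Fin (ar r) → B) → Prop}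
    {h : A → B} (hinj : Function.Injective h) (hhom : IsHom IA IB h) :
    ∀ {n : ℕ} (φ : Fml σ ar ppNeFrag n) (val : Fin n → A),
      Sat IA φ val → Sat IB φ (h ∘ val) := by
  intro n φ
  induction φ with
  | rel r v => exact fun val hs => hhom r _ hs
  | equal he => exact absurd he Bool.false_ne_true
  | nequal _ i j => exact fun val hs hc => hs (hinj hc)
  | fnot hneg => exact absurd hneg Bool.false_ne_true
  | fand φ ψ ihφ ihψ => exact fun val hs => ⟨ihφ val hs.1, ihψ val hs.2⟩
  | forr ho => exact absurd ho Bool.false_ne_true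
  | fex φ ih =>
      rintro val ⟨a, ha⟩
      exact ⟨h a, Fin.comp_snoc h val a ▸ ih _ ha⟩
  | fall hall => exact absurd hall Bool.false_ne_true

end Sat

section Diagram

variable {σ : Type} {ar : σ → ℕ} {A B : Type} (IA : ∀ r : σ, (Fin (ar r) → A) → Prop)

def diagram {n : ℕ} (v : Fin n → A) :
    {p : Σ r : σ, Fin (ar r) → Fin n // IA p.1 (v ∘ p.2)} ⊕ {p : Fin n × Fin n // p.1 ≠ p.2} →
      Fml σ ar ppNeFrag n
  | .inl p => .rel p.1.1 p.1.2
  | .inr p => .nequal rfl p.1.1 p.1.2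

theorem sat_diagram {n : ℕ} {v : Fin n → A} (hv : Function.Injective v) :
    ∀ d, Sat IA (diagram IA v d) v
  | .inl p => p.2
  | .inr p => fun h => p.2 (hv h)

variable {IA} {IB : ∀ r : σ, (Fin (ar r) → B) → Prop}

theorem injective_isHom_of_sat_diagram {n : ℕ} (e : Fin n ≃ A) {w : Fin n → B}
    (hw : ∀ d, Sat IB (diagram IA e d) w) :
    Function.Injective (w ∘ e.symm) ∧ IsHom IA IB (w ∘ e.symm) := by
  constructor
  · intro a a' h
    by_contra hne
    exact hw (.inr ⟨(e.symm a, e.symm a'), e.symm.injective.ne hne⟩) h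
  · intro r t ht
    exact hw (.inl ⟨⟨r, e.symm ∘ t⟩, by simpa [Function.comp_def] using ht⟩)

end Diagram

theorem ppNe_containment_iff_injective_hom_general {σ : Type} [Finite σ] (ar : σ → ℕ)
    {A B : Type} [Finite A] [Nonempty B]
    (IA : ∀ r : σ, (Fin (ar r) → A) → Prop)
    (IB : ∀ r : σ, (Fin (ar r) → B) → Prop) :
    (∀ φ : Fml σ ar ppNeFrag 0, Sat IA φ Fin.elim0 → Sat IB φ Fin.elim0) ↔
      ∃ h : A → B, Function.Injective h ∧ IsHom IA IB h := by
  constructor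
  · intro hcont
    let e := (Finite.equivFin A).symm
    obtain ⟨w, hw⟩ := exists_forall_sat_of_containment hcont (diagram IA e)
      ⟨e, sat_diagram IA e.injective⟩
    exact ⟨w ∘ e.symm, injective_isHom_of_sat_diagram e hw⟩
  · rintro ⟨h, hinj, hhom⟩ φ hφ
    simpa [Subsingleton.elim (h ∘ Fin.elim0) Fin.elim0] using
      sat_of_injective_isHom hinj hhom φ Fin.elim0 hφ

/-- {∃,∧,≠}-FO containment is characterised by injective homomorphism. -/
theorem ppNe_containment_iff_injective_hom {σ : Type} [Finite σ] (ar : σ → ℕ)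
    {A B : Type} [Finite A] [Finite B] [Nonempty A] [Nonempty B]
    (IA : ∀ r : σ, (Fin (ar r) → A) → Prop)
    (IB : ∀ r : σ, (Fin (ar r) → B) → Prop) :
    (∀ φ : Fml σ ar ppNeFrag 0, Sat IA φ Fin.elim0 → Sat IB φ Fin.elim0) ↔
      ∃ h : A → B, Function.Injective h ∧ IsHom IA IB h :=
  ppNe_containment_iff_injective_hom_general ar IA IB

end MC
end

section
/- Let 𝒜 and ℬ be two finite σ-structures. Then 𝒜 and ℬ satisfy exactly the same {∃,∧,≠}-FO sentences if and only if 𝒜 and ℬ are isomorphic. -/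
namespace MC

variable {σ : Type} {ar : σ → ℕ}

/-- Close a formula under iterated existential quantification. -/
def exs {F : Frag} : ∀ {n : ℕ}, Fml σ ar F n → Fml σ ar F 0
  | 0, φ => φ
  | _+1, φ => exs (.fex φ)

theorem sat_exs {F : Frag} {A : Type} (I : ∀ r, (Fin (ar r) → A) → Prop) :
    ∀ {n : ℕ} (φ : Fml σ ar F n),
      Sat I (exs φ) Fin.elim0 ↔ ∃ v : Fin n → A, Sat I φ v
  | 0, φ => by
      simp only [exs]
      constructor
      · exact fun h => ⟨Fin.elim0, h⟩
      · rintro ⟨v, hv⟩; rwa [Subsingleton.elim Fin.elim0 v]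
  | n+1, φ => by
      rw [show (exs φ : Fml σ ar F 0) = exs (.fex φ) from rfl, sat_exs I (.fex φ)]
      constructor
      · rintro ⟨v, a, h⟩; exact ⟨Fin.snoc v a, h⟩
      · rintro ⟨w, h⟩
        exact ⟨Fin.init w, w (Fin.last n), by rwa [Fin.snoc_init_self]⟩

theorem sat_foldr {F : Frag} {A : Type} (I : ∀ r, (Fin (ar r) → A) → Prop)
    {n : ℕ} (ψ : Fml σ ar F n) (l : List (Fml σ ar F n)) (v : Fin n → A) :
    Sat I (l.foldr .fand ψ) v ↔ Sat I ψ v ∧ ∀ χ ∈ l, Sat I χ v := by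
  induction l with
  | nil => simp
  | cons χ l ih =>
      simp only [List.foldr_cons, List.mem_cons]
      rw [show Sat I (Fml.fand χ (l.foldr .fand ψ)) v
            = (Sat I χ v ∧ Sat I (l.foldr .fand ψ) v) from rfl, ih]
      constructor
      · rintro ⟨hχ, hψ, hl⟩
        exact ⟨hψ, fun χ' h => h.elim (fun he => he ▸ hχ) (hl χ')⟩
      · rintro ⟨hψ, hl⟩
        exact ⟨hl χ (Or.inl rfl), hψ, fun χ' h => hl χ' (Or.inr h)⟩

theorem transfer {A B : Type} [Nonempty B]
    (IA : ∀ r, (Fin (ar r) → A) → Prop) (IB : ∀ r, (Fin (ar r) → B) → Prop)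
    (hsat : ∀ φ : Fml σ ar ppNeFrag 0, Sat IA φ Fin.elim0 → Sat IB φ Fin.elim0)
    {n : ℕ} (L : List (Fml σ ar ppNeFrag n))
    (h : ∃ v : Fin n → A, ∀ ψ ∈ L, Sat IA ψ v) :
    ∃ v : Fin n → B, ∀ ψ ∈ L, Sat IB ψ v := by
  cases L with
  | nil => exact ⟨fun _ => Classical.arbitrary B, by simp⟩
  | cons ψ l =>
      obtain ⟨v, hv⟩ := h
      have hA : Sat IA (exs (l.foldr .fand ψ)) Fin.elim0 := by
        rw [sat_exs]
        exact ⟨v, (sat_foldr IA ψ l v).2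
          ⟨hv ψ (by simp), fun χ hχ => hv χ (by simp [hχ])⟩⟩
      have hB := hsat _ hA
      rw [sat_exs] at hB
      obtain ⟨w, hw⟩ := hB
      rw [sat_foldr] at hw
      refine ⟨w, ?_⟩
      intro χ hχ
      rcases List.mem_cons.1 hχ with h | h
      · exact h ▸ hw.1
      · exact hw.2 χ h

theorem exists_embed [Finite σ] {A B : Type} [Finite A] [Finite B]
    [Nonempty A] [Nonempty B]
    (IA : ∀ r, (Fin (ar r) → A) → Prop) (IB : ∀ r, (Fin (ar r) → B) → Prop)
    (hsat : ∀ φ : Fml σ ar ppNeFrag 0, Sat IA φ Fin.elim0 → Sat IB φ Fin.elim0) :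
    ∃ h : A → B, Function.Injective h ∧
      ∀ r t, IA r t → IB r fun i => h (t i) := by
  classical
  have : Fintype A := Fintype.ofFinite A
  have : Fintype σ := Fintype.ofFinite σ
  set n := Fintype.card A with hn
  set eA : A ≃ Fin n := Fintype.equivFin A with heA
  set e : Fin n → A := fun i => eA.symm i with he
  set L1 : List (Fml σ ar ppNeFrag n) :=
    (((Finset.univ : Finset (Fin n × Fin n)).filter fun p => p.1 ≠ p.2).toList.map
      fun p => Fml.nequal rfl p.1 p.2) with hL1
  set L2 : List (Fml σ ar ppNeFrag n) :=
    (((Finset.univ : Finset (Σ r : σ, Fin (ar r) → Fin n)).filter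
        fun s => IA s.1 fun i => e (s.2 i)).toList.map
      fun s => Fml.rel s.1 s.2) with hL2
  have hvA : ∀ ψ ∈ L1 ++ L2, Sat IA ψ e := by
    intro ψ hψ
    rcases List.mem_append.1 hψ with h | h
    · rw [hL1] at h
      simp only [List.mem_map, Finset.mem_toList, Finset.mem_filter,
        Finset.mem_univ, true_and] at h
      obtain ⟨p, hp, rfl⟩ := h
      exact fun hc => hp (eA.symm.injective hc)
    · rw [hL2] at h
      simp only [List.mem_map, Finset.mem_toList, Finset.mem_filter,
        Finset.mem_univ, true_and] at h
      obtain ⟨s, hs, rfl⟩ := h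
      exact hs
  obtain ⟨w, hw⟩ := transfer IA IB hsat (L1 ++ L2) ⟨e, hvA⟩
  refine ⟨fun a => w (eA a), ?_, ?_⟩
  · intro x y hxy
    by_contra hne
    have hmem : (Fml.nequal (F := ppNeFrag) rfl (eA x) (eA y)) ∈ L1 ++ L2 := by
      rw [List.mem_append]
      left
      rw [hL1]
      simp only [List.mem_map, Finset.mem_toList, Finset.mem_filter,
        Finset.mem_univ, true_and]
      exact ⟨(eA x, eA y), fun hc => hne (eA.injective hc), rfl⟩
    exact hw _ hmem hxy
  · intro r t ht
    have hmem : (Fml.rel (F := ppNeFrag) r fun i => eA (t i)) ∈ L1 ++ L2 := by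
      rw [List.mem_append]
      right
      rw [hL2]
      simp only [List.mem_map, Finset.mem_toList, Finset.mem_filter,
        Finset.mem_univ, true_and]
      refine ⟨⟨r, fun i => eA (t i)⟩, ?_, rfl⟩
      simpa [he, heA] using ht
    exact hw _ hmem

theorem endo_reflect {A : Type} [Finite A]
    (IA : ∀ r, (Fin (ar r) → A) → Prop) (f : A → A) (hf : Function.Injective f)
    (hfwd : ∀ r t, IA r t → IA r fun i => f (t i)) :
    ∀ r t, IA r (fun i => f (t i)) → IA r t := by
  intro r t hft
  have hΦ : Function.Injective (fun u : Fin (ar r) → A => fun i => f (u i)) :=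
    fun u v h => funext fun i => hf (congrFun h i)
  set S : Set (Fin (ar r) → A) := {u | IA r u} with hS
  have hsub : (fun u : Fin (ar r) → A => fun i => f (u i)) '' S ⊆ S := by
    rintro _ ⟨u, hu, rfl⟩; exact hfwd r u hu
  have heq : (fun u : Fin (ar r) → A => fun i => f (u i)) '' S = S :=
    Set.eq_of_subset_of_ncard_le hsub
      (by rw [Set.ncard_image_of_injective S hΦ]) (Set.toFinite S)
  have : (fun i => f (t i)) ∈ S := hft
  rw [← heq] at this
  obtain ⟨u, hu, huv⟩ := this
  exact (hΦ huv) ▸ hu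

theorem comp_snoc' {A B : Type} {n : ℕ} (h : A → B) (v : Fin n → A) (a : A) :
    (fun i : Fin (n+1) => h (Fin.snoc (α := fun _ => A) v a i)) = Fin.snoc (fun i => h (v i)) (h a) :=
  funext fun i => congrFun (Fin.comp_snoc h v a) i

theorem sat_map {F : Frag} {A B : Type}
    (IA : ∀ r, (Fin (ar r) → A) → Prop) (IB : ∀ r, (Fin (ar r) → B) → Prop)
    (h : A ≃ B) (hrel : ∀ r t, IA r t ↔ IB r fun i => h (t i)) :
    ∀ {n : ℕ} (φ : Fml σ ar F n) (v : Fin n → A),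
      Sat IA φ v ↔ Sat IB φ (fun i => h (v i)) := by
  intro n φ
  induction φ with
  | rel r w => intro v; exact hrel r _
  | equal _ i j => intro v; exact (EquivLike.apply_eq_iff_eq h).symm
  | nequal _ i j => intro v; exact not_congr (EquivLike.apply_eq_iff_eq h).symm
  | fnot _ φ ih =>
      intro v
      exact not_congr (ih v)
  | fand φ ψ ih1 ih2 =>
      intro v
      exact and_congr (ih1 v) (ih2 v)
  | forr _ φ ψ ih1 ih2 =>
      intro v
      exact or_congr (ih1 v) (ih2 v)
  | fex φ ih =>
      intro v
      constructor
      · rintro ⟨a, ha⟩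
        refine ⟨h a, ?_⟩
        have := (ih (Fin.snoc v a)).1 ha
        rwa [comp_snoc'] at this
      · rintro ⟨b, hb⟩
        refine ⟨h.symm b, (ih (Fin.snoc v (h.symm b))).2 ?_⟩
        rw [comp_snoc']
        simpa using hb
  | fall _ φ ih =>
      intro v
      constructor
      · intro hall b
        have := (ih (Fin.snoc v (h.symm b))).1 (hall (h.symm b))
        rw [comp_snoc'] at this
        simpa using this
      · intro hall a
        refine (ih (Fin.snoc v a)).2 ?_
        rw [comp_snoc']
        exact hall (h a)

/-- Two finite structures satisfy exactly the same {∃,∧,≠}-FO sentences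
if and only if they are isomorphic. -/
theorem ppNe_equivalence_iff_isomorphic {σ : Type} [Finite σ] (ar : σ → ℕ)
    {A B : Type} [Finite A] [Finite B] [Nonempty A] [Nonempty B]
    (IA : ∀ r : σ, (Fin (ar r) → A) → Prop)
    (IB : ∀ r : σ, (Fin (ar r) → B) → Prop) :
    (∀ φ : Fml σ ar ppNeFrag 0, Sat IA φ Fin.elim0 ↔ Sat IB φ Fin.elim0) ↔
      ∃ h : A ≃ B, ∀ (r : σ) (t : Fin (ar r) → A),
        IA r t ↔ IB r fun i => h (t i) := by
  constructor
  · intro hsat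
    obtain ⟨h, hinj, hfwd⟩ := exists_embed IA IB fun φ => (hsat φ).1
    obtain ⟨g, ginj, gfwd⟩ := exists_embed IB IA fun φ => (hsat φ).2
    have hbij : Function.Bijective h := by
      classical
      have : Fintype A := Fintype.ofFinite A
      have : Fintype B := Fintype.ofFinite B
      exact (Fintype.bijective_iff_injective_and_card h).2
        ⟨hinj, le_antisymm (Fintype.card_le_of_injective h hinj)
          (Fintype.card_le_of_injective g ginj)⟩
    have hrefl := endo_reflect IA (fun a => g (h a))
      (fun x y hxy => hinj (ginj hxy))
      (fun r t ht => gfwd r _ (hfwd r t ht))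
    exact ⟨Equiv.ofBijective h hbij, fun r t =>
      ⟨hfwd r t, fun hb => hrefl r t (gfwd r _ hb)⟩⟩
  · rintro ⟨h, hrel⟩ φ
    have := sat_map IA IB h hrel φ Fin.elim0
    rwa [show (fun i : Fin 0 => h (Fin.elim0 i)) = Fin.elim0 from
      funext fun i => i.elim0] at this


end MC
end

section
/- Let D be a finite set, M a DSM on D, and U, X ⊆ D such that M contains a U-surjective shop and an X-total shop, |U| is minimal among cardinalities of subsets U' of D such that M contains a U'-surjective shop, |X| is minimal among cardinalities of subsets X' of D such that M contains an X'-total shop, and, subject to these minimality conditions, |U ∩ X| is maximal. Then for every shop f ∈ M that is both U-surjective and X-total, f(X) ∩ (U \ X) = ∅. -/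
namespace MC

/-- A shop (surjective hyper-operation) on `D`: a total and surjective
hyper-operation `D → Set D`. -/
structure Shop (D : Type) where
  f : D → Set D
  total : ∀ a : D, (f a).Nonempty
  surj : ∀ b : D, ∃ a : D, b ∈ f a

variable {D : Type}

/-- Composition of shops: `(comp g f) x = g (f x)`. -/
def Shop.comp (g f : Shop D) : Shop D where
  f := fun x => {z | ∃ y ∈ f.f x, z ∈ g.f y}
  total := by
    intro a
    obtain ⟨y, hy⟩ := f.total a
    obtain ⟨z, hz⟩ := g.total y
    exact ⟨z, y, hy, hz⟩
  surj := by
    intro b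
    obtain ⟨y, hy⟩ := g.surj b
    obtain ⟨x, hx⟩ := f.surj y
    exact ⟨x, y, hx, hy⟩

/-- The identity shop `x ↦ {x}`. -/
def Shop.id : Shop D where
  f := fun x => {x}
  total := fun a => ⟨a, rfl⟩
  surj := fun b => ⟨b, rfl⟩

/-- Iterates of a shop: `pow f 0 = id` and `pow f (n+1) = f ∘ (pow f n)`. -/
def Shop.pow (f : Shop D) : ℕ → Shop D
  | 0 => Shop.id
  | n + 1 => Shop.comp f (f.pow n)

/-- `f` is `U`-surjective (a `U`-shop): `f(U) = D`. -/
def Shop.USurj (f : Shop D) (U : Set D) : Prop :=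
  ∀ b : D, ∃ u ∈ U, b ∈ f.f u

/-- `f` is `X`-total (an `X`-shop): `f⁻¹(X) = D`. -/
def Shop.XTotal (f : Shop D) (X : Set D) : Prop :=
  ∀ a : D, ∃ x ∈ X, x ∈ f.f a

end MC

namespace MC

/-- A down-shop-monoid (DSM): a set of shops containing the identity shop,
closed under composition, and closed under sub-shops. -/
def IsDSM {D : Type} (M : Set (Shop D)) : Prop :=
  Shop.id ∈ M ∧
  (∀ f ∈ M, ∀ g ∈ M, Shop.comp g f ∈ M) ∧
  ∀ f ∈ M, ∀ g : Shop D, (∀ x : D, g.f x ⊆ f.f x) → g ∈ M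

end MC

namespace MC

def app (g : D → Set D) (S : Set D) : Set D := {z | ∃ y ∈ S, z ∈ g y}

lemma mem_app {g : D → Set D} {S : Set D} {z : D} :
    z ∈ app g S ↔ ∃ y ∈ S, z ∈ g y := Iff.rfl

lemma pow_succ_f (f : Shop D) (n : ℕ) (x : D) :
    (f.pow (n + 1)).f x = app f.f ((f.pow n).f x) := rfl

lemma pow_zero_f (f : Shop D) (x : D) : (f.pow 0).f x = {x} := rfl

lemma pow_add_f (f : Shop D) (a b : ℕ) (x : D) :
    (f.pow (b + a)).f x = app (f.pow a).f ((f.pow b).f x) := by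
  induction a with
  | zero => ext z; simp [app, pow_zero_f]
  | succ a ih =>
      show (f.pow ((b + a) + 1)).f x = _
      ext z
      constructor
      · rintro ⟨y, hy, hzy⟩
        rw [ih] at hy
        obtain ⟨w, hw, hyw⟩ := hy
        exact ⟨w, hw, y, hyw, hzy⟩
      · rintro ⟨w, hw, y, hyw, hzy⟩
        refine ⟨y, ?_, hzy⟩
        rw [ih]
        exact ⟨w, hw, hyw⟩

lemma pow_mem {M : Set (Shop D)} (hM : IsDSM M) {f : Shop D} (hf : f ∈ M) :
    ∀ n, f.pow n ∈ M := by
  intro n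
  induction n with
  | zero => exact hM.1
  | succ n ih => exact hM.2.1 (f.pow n) ih f hf

lemma pow_usurj {f : Shop D} {U : Set D} (hs : f.USurj U) :
    ∀ n, (f.pow (n + 1)).USurj U := by
  intro n
  induction n with
  | zero =>
      intro b
      obtain ⟨u, hu, hb⟩ := hs b
      exact ⟨u, hu, u, rfl, hb⟩
  | succ n ih =>
      intro b
      obtain ⟨y, hy⟩ := f.surj b
      obtain ⟨u, hu, hyu⟩ := ih y
      exact ⟨u, hu, y, hyu, hy⟩

lemma pow_xtotal {f : Shop D} {X : Set D} (ht : f.XTotal X) :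
    ∀ n, (f.pow (n + 1)).XTotal X := by
  intro n
  induction n with
  | zero =>
      intro a
      obtain ⟨x, hx, hxa⟩ := ht a
      exact ⟨x, hx, a, rfl, hxa⟩
  | succ n ih =>
      intro a
      obtain ⟨x, hxX, hx⟩ := ih a
      obtain ⟨x', hx'X, hx'⟩ := ht x
      exact ⟨x', hx'X, x, hx, hx'⟩

/-- Some positive power of `f` is idempotent as a relation. -/
lemma exists_idem_pow [Finite D] (f : Shop D) :
    ∃ m : ℕ, 1 ≤ m ∧ ∀ a : D, app (f.pow m).f ((f.pow m).f a) = (f.pow m).f a := by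
  set P : ℕ → (D → Set D) := fun n => (f.pow n).f with hP
  obtain ⟨i, j, hne, heq⟩ := Finite.exists_ne_map_eq_of_infinite P
  wlog hij : i < j generalizing i j
  · exact this j i hne.symm heq.symm (by omega)
  set p := j - i with hp
  have hp1 : 1 ≤ p := by omega
  have hstep : ∀ n n' : ℕ, P n = P n' → P (n + 1) = P (n' + 1) := by
    intro n n' h
    funext a
    show (f.pow (n + 1)).f a = (f.pow (n' + 1)).f a
    rw [pow_succ_f, pow_succ_f]
    show app f.f (P n a) = app f.f (P n' a)
    rw [h]
  have hshift : ∀ k, P (i + k + p) = P (i + k) := by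
    intro k
    induction k with
    | zero =>
        have : i + 0 + p = j := by omega
        rw [this]
        exact heq.symm ▸ rfl
    | succ k ih =>
        have e1 : i + (k + 1) + p = (i + k + p) + 1 := by omega
        rw [e1]
        have := hstep _ _ ih
        rwa [show i + k + 1 = i + (k+1) from by omega] at this
  have hge : ∀ n, i ≤ n → P (n + p) = P n := by
    intro n hn
    have := hshift (n - i)
    rwa [show i + (n - i) = n from by omega] at this
  have hper : ∀ t n, i ≤ n → P (n + t * p) = P n := by
    intro t
    induction t with
    | zero => intro n _; simp
    | succ t ih =>
        intro n hn
        have e1 : n + (t + 1) * p = (n + t * p) + p := by ring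
        rw [e1, hge _ (by omega), ih n hn]
  refine ⟨(i + 1) * p, by nlinarith, ?_⟩
  intro a
  have h2m : P ((i + 1) * p + (i + 1) * p) = P ((i + 1) * p) := by
    exact hper (i + 1) ((i + 1) * p) (by nlinarith)
  have := pow_add_f f ((i + 1) * p) ((i + 1) * p) a
  have h3 : (f.pow ((i + 1) * p + (i + 1) * p)).f a = (f.pow ((i + 1) * p)).f a := by
    show P ((i + 1) * p + (i + 1) * p) a = P ((i + 1) * p) a
    rw [h2m]
  rw [← this, h3]


/-- In a DSM with minimal witnessing sets `U`, `X` (and maximal intersection),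
every `U`-`X`-shop of the DSM satisfies `f(X) ∩ (U \ X) = ∅`. -/
theorem UXshop_image_of_X_avoids_U_diff_X {D : Type} [Finite D]
    (M : Set (Shop D)) (hM : IsDSM M) (U X : Set D)
    (hU : ∃ f ∈ M, f.USurj U) (hX : ∃ f ∈ M, f.XTotal X)
    (hUmin : ∀ U' : Set D, (∃ f ∈ M, f.USurj U') → U.ncard ≤ U'.ncard)
    (hXmin : ∀ X' : Set D, (∃ f ∈ M, f.XTotal X') → X.ncard ≤ X'.ncard)
    (hmax : ∀ U' X' : Set D, (∃ f ∈ M, f.USurj U') → (∃ f ∈ M, f.XTotal X') →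
      U'.ncard = U.ncard → X'.ncard = X.ncard →
      (U' ∩ X').ncard ≤ (U ∩ X).ncard) :
    ∀ f ∈ M, f.USurj U → f.XTotal X →
      (⋃ x ∈ X, f.f x) ∩ (U \ X) = ∅ := by
  intro f hf hUs hXt
  rw [Set.eq_empty_iff_forall_notMem]
  rintro b ⟨hbim, hbU, hbX⟩
  simp only [Set.mem_iUnion] at hbim
  obtain ⟨x₀, hx₀X, hbf⟩ := hbim
  -- Step A: X ⊆ f(X)
  have hXsub : ∀ x ∈ X, ∃ x' ∈ X, x ∈ f.f x' := by
    have hcomp : (Shop.comp f f) ∈ M := hM.2.1 f hf f hf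
    set X₂ : Set D := X ∩ {x | ∃ x' ∈ X, x ∈ f.f x'} with hX₂
    have htot : (Shop.comp f f).XTotal X₂ := by
      intro a
      obtain ⟨x, hxX, hxfa⟩ := hXt a
      obtain ⟨x', hx'X, hx'fx⟩ := hXt x
      exact ⟨x', ⟨hx'X, x, hxX, hx'fx⟩, x, hxfa, hx'fx⟩
    have hle := hXmin X₂ ⟨Shop.comp f f, hcomp, htot⟩
    have heq : X₂ = X := Set.eq_of_subset_of_ncard_le Set.inter_subset_left hle (Set.toFinite X)
    intro x hx
    have : x ∈ X₂ := heq ▸ hx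
    exact this.2
  -- iterate: every x in X is in (f.pow n)(X)
  have hXpow : ∀ n, ∀ x ∈ X, ∃ x' ∈ X, x ∈ (f.pow n).f x' := by
    intro n
    induction n with
    | zero => intro x hx; exact ⟨x, hx, rfl⟩
    | succ n ih =>
        intro x hx
        obtain ⟨y, hyX, hxy⟩ := hXsub x hx
        obtain ⟨x', hx'X, hyx'⟩ := ih y hyX
        exact ⟨x', hx'X, y, hyx', hxy⟩
  -- idempotent power
  obtain ⟨m, hm1, hidem⟩ := exists_idem_pow f
  set e := f.pow m with he
  have heM : e ∈ M := pow_mem hM hf m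
  have heU : e.USurj U := by
    have := pow_usurj hUs (m - 1)
    rwa [show m - 1 + 1 = m from by omega] at this
  have heX : e.XTotal X := by
    have := pow_xtotal hXt (m - 1)
    rwa [show m - 1 + 1 = m from by omega] at this
  -- b ∈ e(X)
  obtain ⟨x₁, hx₁X, hx₀p⟩ := hXpow (m - 1) x₀ hx₀X
  have hbE : b ∈ e.f x₁ := by
    have : (f.pow (m - 1 + 1)).f x₁ = app f.f ((f.pow (m - 1)).f x₁) := pow_succ_f f (m - 1) x₁
    rw [he, show m = m - 1 + 1 from by omega, this]
    exact ⟨x₀, hx₀p, hbf⟩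
  have hx₁ne : x₁ ≠ b := fun h => hbX (h ▸ hx₁X)
  by_cases hx₁U : x₁ ∈ U
  · -- U \ {b} still works: contradiction with |U| minimal
    have hU' : e.USurj (U \ {b}) := by
      intro d
      obtain ⟨u, huU, hd⟩ := heU d
      by_cases hub : u = b
      · refine ⟨x₁, ⟨hx₁U, hx₁ne⟩, ?_⟩
        have : d ∈ app e.f (e.f x₁) := ⟨b, hbE, hub ▸ hd⟩
        rwa [hidem x₁] at this
      · exact ⟨u, ⟨huU, hub⟩, hd⟩
    have hle := hUmin (U \ {b}) ⟨e, heM, hU'⟩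
    have hlt : (U \ {b}).ncard < U.ncard :=
      Set.ncard_diff_singleton_lt_of_mem hbU (Set.toFinite U)
    omega
  · -- swap x₁ for b in X: contradiction with maximality of |U ∩ X|
    set X' : Set D := insert b (X \ {x₁}) with hX'
    have hX't : e.XTotal X' := by
      intro a
      obtain ⟨x, hxX, hxE⟩ := heX a
      by_cases hxx : x = x₁
      · refine ⟨b, Set.mem_insert _ _, ?_⟩
        have : b ∈ app e.f (e.f a) := ⟨x₁, hxx ▸ hxE, hbE⟩
        rwa [hidem a] at this
      · exact ⟨x, Set.mem_insert_of_mem _ ⟨hxX, hxx⟩, hxE⟩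
    have hbnotin : b ∉ X \ {x₁} := fun h => hbX h.1
    have hcard : X'.ncard = X.ncard := by
      rw [hX', Set.ncard_insert_of_notMem hbnotin (Set.toFinite _),
        Set.ncard_diff_singleton_add_one hx₁X (Set.toFinite X)]
    have hle := hmax U X' ⟨f, hf, hUs⟩ ⟨e, heM, hX't⟩ rfl hcard
    have hUX' : U ∩ X' = insert b (U ∩ X) := by
      ext y
      simp only [hX', Set.mem_inter_iff, Set.mem_insert_iff, Set.mem_diff,
        Set.mem_singleton_iff]
      constructor
      · rintro ⟨hyU, hyb | ⟨hyX, hyx⟩⟩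
        · exact Or.inl hyb
        · exact Or.inr ⟨hyU, hyX⟩
      · rintro (rfl | ⟨hyU, hyX⟩)
        · exact ⟨hbU, Or.inl rfl⟩
        · refine ⟨hyU, Or.inr ⟨hyX, ?_⟩⟩
          rintro rfl
          exact hx₁U hyU
    have hbnot : b ∉ U ∩ X := fun h => hbX h.2
    rw [hUX', Set.ncard_insert_of_notMem hbnot (Set.toFinite _)] at hle
    omega


end MC
end
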